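/- (Goldberg's theorem for the sphere.) Let S² denote the unit sphere in EuclideanSpace ℝ (Fin 3), let P ∈ S², and let n ≥ 1. Fix a basepoint x₀ ∈ F_n(S² \ {P}) ⊆ F_n(S²). Then the homomorphism π₁(F_n(S² \ {P}), x₀) → π₁(F_n(S²), x₀) induced on fundamental groups by the subspace inclusion F_n(S² \ {P}) ↪ F_n(S²) is surjective; that is, P_n(S²) is generated by the images of the Artin pure braids. -/

import Mathlib

open CategoryTheory

/-- The `n`-th ordered configuration space of `M`: the subspace of injective tuples
inside the product space `Fin n → M`. -/
abbrev ConfSpace (n : ℕ) (M : Type*) [TopologicalSpace M] : Type _ :=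
  {f : Fin n → M // Function.Injective f}

/-- A group `G` has the R∞-property if for every automorphism `φ` of `G` the set of
`φ`-twisted conjugacy classes is infinite, where `x` and `y` are twisted conjugate
via `φ` iff `∃ z, y = z * x * (φ z)⁻¹`. -/
def HasRinfty (G : Type*) [Group G] : Prop :=
  ∀ φ : G ≃* G, Infinite (Quot fun x y : G => ∃ z : G, y = z * x * (φ z)⁻¹)

universe u

/-- The homomorphism induced on fundamental groups by a continuous map. -/
noncomputable def inducedHom {X Y : Type u} [TopologicalSpace X] [TopologicalSpace Y]
    (f : C(X, Y)) (x : X) :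
    FundamentalGroup X x →* FundamentalGroup Y (f x) :=
  Functor.mapEnd ⟨x⟩
    (show FundamentalGroupoid X ⥤ FundamentalGroupoid Y from
      FundamentalGroupoid.fundamentalGroupoidFunctor.map
        (X := TopCat.of X) (Y := TopCat.of Y) (TopCat.ofHom f))

/-- The continuous map between ordered configuration spaces induced by a continuous
injection `M → N`. -/
def confMapC {M N : Type*} [TopologicalSpace M] [TopologicalSpace N]
    (f : C(M, N)) (hf : Function.Injective f) (n : ℕ) :
    C(ConfSpace n M, ConfSpace n N) where
  toFun g := ⟨⇑f ∘ g.1, hf.comp g.2⟩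
  continuous_toFun := Continuous.subtype_mk
    (continuous_pi fun i =>
      f.continuous.comp ((continuous_apply i).comp continuous_subtype_val)) _

/-- The inclusion of the ordered configuration space into the product space. -/
def confToPi (n : ℕ) (M : Type*) [TopologicalSpace M] : C(ConfSpace n M, Fin n → M) :=
  ⟨Subtype.val, continuous_subtype_val⟩

section GoldbergProof

open Metric Set Filter Topology
open scoped RealInnerProductSpace


attribute [local instance] Path.Homotopic.setoid

theorem inducedHom_surj {X Y : Type u} [TopologicalSpace X] [TopologicalSpace Y]
    (f : C(X, Y)) (x : X)
    (h : ∀ γ : Path (f x) (f x), ∃ γ' : Path x x, (γ'.map f.continuous).Homotopic γ) :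
    Function.Surjective ⇑(inducedHom f x) := by
  intro g
  obtain ⟨γ, hγ⟩ := Quotient.exists_rep (g : Path.Homotopic.Quotient (f x) (f x))
  obtain ⟨γ', hh⟩ := h γ
  refine ⟨(⟦γ'⟧ : Path.Homotopic.Quotient x x), ?_⟩
  show (FundamentalGroupoid.fundamentalGroupoidFunctor.map
        (X := TopCat.of X) (Y := TopCat.of Y) (TopCat.ofHom f)).map
        (⟦γ'⟧ : Path.Homotopic.Quotient x x) = g
  rw [← hγ]
  exact Quotient.sound hh


open CategoryTheory Metric Set Filter Topology
open scoped RealInnerProductSpace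


noncomputable section GoldbergAux

abbrev E3 : Type := EuclideanSpace ℝ (Fin 3)
abbrev S2 : Type := ↥(sphere (0 : E3) 1)

/-! ### reflections -/

/-- reflection in the hyperplane orthogonal to `u` -/
def rfl3 (u y : E3) : E3 := y - (2 * ⟪y, u⟫) • u

theorem rfl3_norm {u : E3} (hu : ‖u‖ = 1) (y : E3) : ‖rfl3 u y‖ = ‖y‖ := by
  have h1 : ‖rfl3 u y‖ ^ 2 = ‖y‖ ^ 2 := by
    rw [rfl3, norm_sub_sq_real, real_inner_smul_right, norm_smul]
    rw [Real.norm_eq_abs, mul_pow, sq_abs, hu]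
    ring_nf
    try rw [real_inner_comm u y]
    try ring
  rw [← Real.sqrt_sq (norm_nonneg (rfl3 u y)), ← Real.sqrt_sq (norm_nonneg y), h1]

theorem rfl3_invol {u : E3} (hu : ‖u‖ = 1) (y : E3) : rfl3 u (rfl3 u y) = y := by
  have huu : ⟪u, u⟫ = 1 := by rw [real_inner_self_eq_norm_sq, hu]; norm_num
  simp only [rfl3, inner_sub_left, real_inner_smul_left, huu]
  module

theorem rfl3_cont : Continuous fun p : E3 × E3 => rfl3 p.1 p.2 := by
  unfold rfl3
  have h1 : Continuous fun p : E3 × E3 => (⟪p.2, p.1⟫ : ℝ) :=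
    continuous_inner.comp (continuous_snd.prodMk continuous_fst)
  exact continuous_snd.sub (((continuous_const.mul h1)).smul continuous_fst)

/-- unit vector in direction `P + xi` -/
def nhat (P xi : E3) : E3 := ‖P + xi‖⁻¹ • (P + xi)

/-- the isometry moving `xi` to `P` -/
def Amap (P xi y : E3) : E3 := rfl3 P (rfl3 (nhat P xi) y)

variable {P : E3} (hP : ‖P‖ = 1)

theorem padd_ne_zero {xi : E3} (hne : xi ≠ -P) : P + xi ≠ 0 := by
  intro h
  exact hne (by linear_combination (norm := module) h)

include hP in
theorem one_add_inner_pos {xi : E3} (hxi : ‖xi‖ = 1) (hne : xi ≠ -P) : 0 < 1 + ⟪P, xi⟫ := by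
  have h0 : P + xi ≠ 0 := padd_ne_zero hne
  have h1 : 0 < ‖P + xi‖ ^ 2 := pow_pos (norm_pos_iff.mpr h0) 2
  have h2 : ‖P + xi‖ ^ 2 = 2 + 2 * ⟪P, xi⟫ := by
    rw [norm_add_sq_real, hP, hxi]; ring
  linarith

theorem nhat_norm {xi : E3} (hne : xi ≠ -P) : ‖nhat P xi‖ = 1 := by
  have h0 : P + xi ≠ 0 := padd_ne_zero hne
  have h1 : 0 < ‖P + xi‖ := norm_pos_iff.mpr h0
  rw [nhat, norm_smul, Real.norm_eq_abs, abs_of_pos (inv_pos.mpr h1), inv_mul_cancel₀ h1.ne']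

include hP in
theorem Amap_norm {xi : E3} (hne : xi ≠ -P) (y : E3) :
    ‖Amap P xi y‖ = ‖y‖ := by
  rw [Amap, rfl3_norm hP, rfl3_norm (nhat_norm hne)]

include hP in
theorem Amap_inj {xi : E3} (hne : xi ≠ -P) :
    Function.Injective (Amap P xi) := by
  intro a b hab
  have := congrArg (fun z => rfl3 (nhat P xi) (rfl3 P z)) hab
  simpa [Amap, rfl3_invol hP, rfl3_invol (nhat_norm hne)] using this

include hP in
theorem Amap_apply_self {xi : E3} (hxi : ‖xi‖ = 1) (hne : xi ≠ -P) :
    Amap P xi xi = P := by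
  have h0 : P + xi ≠ 0 := padd_ne_zero hne
  have hpos := one_add_inner_pos hP hxi hne
  have h2 : ‖P + xi‖ ^ 2 = 2 + 2 * ⟪P, xi⟫ := by
    rw [norm_add_sq_real, hP, hxi]; ring
  have hstep : rfl3 (nhat P xi) xi = -P := by
    rw [rfl3, nhat, real_inner_smul_right, smul_smul]
    have hin : ⟪xi, P + xi⟫ = ⟪P, xi⟫ + 1 := by
      rw [inner_add_right, real_inner_self_eq_norm_sq, hxi, real_inner_comm]; norm_num
    rw [hin]
    have hne2 : (2 : ℝ) + 2 * ⟪P, xi⟫ ≠ 0 := by linarith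
    have hcoef : 2 * (‖P + xi‖⁻¹ * (⟪P, xi⟫ + 1)) * ‖P + xi‖⁻¹ = 1 := by
      rw [show 2 * (‖P + xi‖⁻¹ * (⟪P, xi⟫ + 1)) * ‖P + xi‖⁻¹
          = (2 * (⟪P, xi⟫ + 1)) * (‖P + xi‖^2)⁻¹ by ring]
      rw [h2, show (2:ℝ) * (⟪P, xi⟫ + 1) = 2 + 2 * ⟪P, xi⟫ by ring, mul_inv_cancel₀ hne2]
    rw [hcoef, one_smul]
    module
  rw [Amap, hstep, rfl3]
  have : ⟪-P, P⟫ = -1 := by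
    rw [inner_neg_left, real_inner_self_eq_norm_sq, hP]; norm_num
  rw [this]
  module

include hP in
theorem Amap_P (y : E3) : Amap P P y = y := by
  have hnh : nhat P P = P := by
    rw [nhat]
    have : P + P = (2:ℝ) • P := by module
    rw [this, norm_smul]
    simp only [Real.norm_ofNat, hP, mul_one]
    rw [smul_smul]
    norm_num
  rw [Amap, hnh, rfl3_invol hP]

include hP in
theorem Amap_eq_iff {xi : E3} (hxi : ‖xi‖ = 1) (hne : xi ≠ -P) (y : E3) :
    Amap P xi y = P ↔ y = xi := by
  constructor
  · intro h
    have := Amap_apply_self hP hxi hne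
    exact Amap_inj hP hne (h.trans this.symm)
  · rintro rfl
    exact Amap_apply_self hP hxi hne

include hP in
theorem Amap_cont {X : Type*} [TopologicalSpace X] {f g : X → E3}
    (hf : Continuous f) (hg : Continuous g) (h0 : ∀ a, f a ≠ -P) :
    Continuous fun a => Amap P (f a) (g a) := by
  unfold Amap nhat
  have hadd : Continuous fun a => P + f a := continuous_const.add hf
  have hnorm : Continuous fun a => ‖P + f a‖⁻¹ :=
    hadd.norm.inv₀ fun a => norm_ne_zero_iff.mpr (padd_ne_zero (h0 a))
  have hnh : Continuous fun a => ‖P + f a‖⁻¹ • (P + f a) := hnorm.smul hadd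
  have h1 : Continuous fun a => rfl3 (‖P + f a‖⁻¹ • (P + f a)) (g a) :=
    rfl3_cont.comp (hnh.prodMk hg)
  exact rfl3_cont.comp (continuous_const.prodMk h1)

/-! ### path connectivity lemmas -/

theorem IsPathConnected.prodSet {X Y : Type*} [TopologicalSpace X] [TopologicalSpace Y]
    {s : Set X} {t : Set Y} (hs : IsPathConnected s) (ht : IsPathConnected t) :
    IsPathConnected (s ×ˢ t) := by
  obtain ⟨a, ha, hsa⟩ := hs
  obtain ⟨b, hb, htb⟩ := ht
  refine ⟨(a, b), ⟨ha, hb⟩, ?_⟩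
  rintro ⟨x, y⟩ ⟨hx, hy⟩
  obtain ⟨p, hp⟩ := hsa hx
  obtain ⟨q, hq⟩ := htb hy
  exact ⟨p.prod q, fun u => ⟨hp u, hq u⟩⟩

theorem locPC_prod {X Y : Type*} [TopologicalSpace X] [TopologicalSpace Y]
    [LocallyPathConnectedSpace X] [LocallyPathConnectedSpace Y] :
    LocallyPathConnectedSpace (X × Y) := by
  refine LocPathConnectedSpace.of_bases
    (fun z => (path_connected_basis z.1).prod_nhds (path_connected_basis z.2)) ?_
  rintro ⟨a, b⟩ ⟨s, t⟩ ⟨⟨_, hs⟩, ⟨_, ht⟩⟩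
  exact hs.prodSet ht

theorem locPC_of_balls {X : Type*} [MetricSpace X]
    (h : ∀ (x : X) (r : ℝ), 0 < r → r ≤ 1 → IsPathConnected (ball x r)) :
    LocallyPathConnectedSpace X := by
  have hb : ∀ x : X, (𝓝 x).HasBasis (fun r : ℝ => 0 < r ∧ r ≤ 1) (ball x) := by
    intro x
    refine (nhds_basis_ball (x := x)).to_hasBasis ?_ ?_
    · intro r hr
      exact ⟨min r 1, ⟨lt_min hr one_pos, min_le_right _ _⟩, ball_subset_ball (min_le_left _ _)⟩
    · rintro r ⟨hr, _⟩
      exact ⟨r, hr, subset_rfl⟩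
  exact LocPathConnectedSpace.of_bases hb fun x r ⟨h1, h2⟩ => h x r h1 h2

theorem ball_pc_I (t : unitInterval) (r : ℝ) (hr : 0 < r) :
    IsPathConnected (ball t r) := by
  refine ⟨t, mem_ball_self hr, ?_⟩
  intro y hy
  have hyd : |y.1 - t.1| < r := by
    rw [mem_ball, Subtype.dist_eq, Real.dist_eq] at hy; exact hy
  refine ⟨⟨⟨fun s => ⟨(1 - s.1) * t.1 + s.1 * y.1, ?_, ?_⟩, ?_⟩, ?_, ?_⟩, ?_⟩
  · nlinarith [s.2.1, s.2.2, t.2.1, t.2.2, y.2.1, y.2.2]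
  · nlinarith [s.2.1, s.2.2, t.2.1, t.2.2, y.2.1, y.2.2]
  · exact Continuous.subtype_mk (by fun_prop) _
  · ext; simp
  · ext; simp
  · intro s
    rw [mem_ball, Subtype.dist_eq, Real.dist_eq]
    have h : ((1 - s.1) * t.1 + s.1 * y.1) - t.1 = s.1 * (y.1 - t.1) := by ring
    show |((1 - s.1) * t.1 + s.1 * y.1) - t.1| < r
    rw [h, abs_mul, abs_of_nonneg s.2.1]
    nlinarith [s.2.1, s.2.2, abs_nonneg (y.1 - t.1)]

theorem inner_eq_of_units {a b : E3} (ha : ‖a‖ = 1) (hb : ‖b‖ = 1) :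
    ⟪a, b⟫ = 1 - ‖a - b‖ ^ 2 / 2 := by
  have := norm_sub_sq_real a b
  rw [ha, hb] at this
  linarith

theorem ball_pc_S2 (t : S2) (r : ℝ) (hr : 0 < r) (hr1 : r ≤ 1) :
    IsPathConnected (ball t r) := by
  set c : E3 := (t : E3) with hcdef
  have hc : ‖c‖ = 1 := norm_eq_of_mem_sphere t
  refine ⟨t, mem_ball_self hr, ?_⟩
  intro y hy
  set b : E3 := (y : E3) with hbdef
  have hb : ‖b‖ = 1 := norm_eq_of_mem_sphere y
  have hyd : ‖b - c‖ < r := by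
    rw [mem_ball, Subtype.dist_eq, dist_eq_norm] at hy; exact hy
  have hib : ⟪b, c⟫ > 1 - r ^ 2 / 2 := by
    rw [inner_eq_of_units hb hc]; nlinarith [norm_nonneg (b - c)]
  have hibhalf : (1:ℝ) - r ^ 2 / 2 ≥ 1/2 := by nlinarith
  set w : unitInterval → E3 := fun s => (1 - s.1) • c + s.1 • b with hw
  have hble : ⟪b, c⟫ ≤ 1 := by
    have h2 := real_inner_le_norm b c
    rw [hb, hc] at h2; linarith
  have hinner : ∀ s : unitInterval, ⟪w s, c⟫ ≥ ⟪b, c⟫ := by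
    intro s
    have : ⟪w s, c⟫ = (1 - s.1) * ⟪c, c⟫ + s.1 * ⟪b, c⟫ := by
      simp only [hw, inner_add_left, real_inner_smul_left]
    rw [this, real_inner_self_eq_norm_sq, hc]
    nlinarith [s.2.1, s.2.2]
  have hwnorm : ∀ s : unitInterval, ‖w s‖ ≤ 1 := by
    intro s
    calc ‖w s‖ ≤ ‖(1 - s.1) • c‖ + ‖s.1 • b‖ := norm_add_le _ _
    _ = (1 - s.1) * 1 + s.1 * 1 := by
        rw [norm_smul, norm_smul, hb, hc, Real.norm_eq_abs, Real.norm_eq_abs,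
          abs_of_nonneg s.2.1, abs_of_nonneg (by linarith [s.2.2] : (0:ℝ) ≤ 1 - s.1)]
    _ = 1 := by ring
  have hwpos : ∀ s : unitInterval, 0 < ‖w s‖ := by
    intro s
    have h1 := hinner s
    have h2 := real_inner_le_norm (w s) c
    rw [hc, mul_one] at h2
    nlinarith
  have hq : ∀ s : unitInterval, ‖w s‖⁻¹ • w s ∈ sphere (0:E3) 1 := by
    intro s
    rw [mem_sphere_zero_iff_norm, norm_smul, Real.norm_eq_abs,
      abs_of_pos (inv_pos.mpr (hwpos s))]
    exact inv_mul_cancel₀ (hwpos s).ne'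
  refine ⟨⟨⟨fun s => ⟨‖w s‖⁻¹ • w s, hq s⟩, ?_⟩, ?_, ?_⟩, ?_⟩
  · refine Continuous.subtype_mk ?_ _
    have hwc : Continuous w := by fun_prop
    exact (hwc.norm.inv₀ fun s => (hwpos s).ne').smul hwc
  · apply Subtype.ext
    show ‖w 0‖⁻¹ • w 0 = c
    have : w 0 = c := by simp [hw]
    rw [this, hc]; simp
  · apply Subtype.ext
    show ‖w 1‖⁻¹ • w 1 = b
    have : w 1 = b := by simp [hw]
    rw [this, hb]; simp
  · intro s
    rw [mem_ball, Subtype.dist_eq, dist_eq_norm]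
    show ‖‖w s‖⁻¹ • w s - c‖ < r
    set q : E3 := ‖w s‖⁻¹ • w s with hqdef
    have hqn : ‖q‖ = 1 := mem_sphere_zero_iff_norm.mp (hq s)
    have hiq : ⟪q, c⟫ ≥ ⟪b, c⟫ := by
      rw [hqdef, real_inner_smul_left]
      have h1 : ‖w s‖⁻¹ ≥ 1 := by
        rw [ge_iff_le, le_inv_comm₀ one_pos (hwpos s)]
        · simpa using hwnorm s
      have h2 := hinner s
      nlinarith
    have h3 : ‖q - c‖ ^ 2 = 2 - 2 * ⟪q, c⟫ := by
      have := norm_sub_sq_real q c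
      rw [hqn, hc] at this; linarith
    have hbc2 : ‖b - c‖ ^ 2 = 2 - 2 * ⟪b, c⟫ := by
      have := norm_sub_sq_real b c
      rw [hb, hc] at this; linarith
    nlinarith [norm_nonneg (q - c), hyd, norm_nonneg (b-c)]

theorem rank_orth (v : S2) : 1 < Module.rank ℝ ↥(ℝ ∙ (v : E3))ᗮ := by
  have hv : (v : E3) ≠ 0 := ne_zero_of_mem_unit_sphere v
  have h1 : Module.finrank ℝ ↥(ℝ ∙ (v : E3)) = 1 := finrank_span_singleton hv
  have h2 := Submodule.finrank_add_finrank_orthogonal (K := ℝ ∙ (v : E3))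
  rw [finrank_euclideanSpace_fin, h1] at h2
  have h3 : Module.finrank ℝ ↥(ℝ ∙ (v : E3))ᗮ = 2 := by omega
  have h4 := Module.finrank_eq_rank ℝ ↥(ℝ ∙ (v : E3))ᗮ
  rw [h3] at h4
  rw [← h4]
  exact_mod_cast Nat.one_lt_ofNat

/-- complement of a finite nonempty set in S² is path-connected -/
theorem sphere_compl_pathConnected (F : Set S2) (hF : F.Finite) (hne : F.Nonempty) :
    IsPathConnected {x : S2 | x ∉ F} := by
  obtain ⟨v, hv⟩ := hne
  set e := stereographic (norm_eq_of_mem_sphere v) with he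
  set k : ↥(ℝ ∙ (v : E3))ᗮ → S2 := ⇑e.symm with hk
  have hkc : Continuous k := by
    have := e.symm.continuousOn
    rw [e.symm_source, stereographic_target] at this
    exact continuousOn_univ.mp this
  have hki : Function.Injective k := by
    have := e.symm.injOn
    rw [e.symm_source, stereographic_target] at this
    exact fun a b hab => this (mem_univ a) (mem_univ b) hab
  have hrange : range k = {v}ᶜ := by
    have := e.symm_image_target_eq_source
    rw [stereographic_target, stereographic_source] at this
    rw [← this, image_univ]
  have hGfin : (k ⁻¹' F).Finite := hF.preimage hki.injOn
  have hpc : IsPathConnected (k ⁻¹' F)ᶜ :=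
    hGfin.countable.isPathConnected_compl_of_one_lt_rank (rank_orth v)
  have himg : k '' (k ⁻¹' F)ᶜ = {x : S2 | x ∉ F} := by
    rw [image_compl_preimage, hrange]
    ext x
    simp only [mem_diff, mem_compl_iff, mem_singleton_iff, mem_setOf_eq]
    constructor
    · rintro ⟨_, h2⟩; exact h2
    · intro h; exact ⟨fun hx => h (hx ▸ hv), h⟩
  rw [← himg]
  exact hpc.image hkc

/-- an open set of a product whose slices are preconnected and nonempty is preconnected. -/
theorem slices_preconnected {T X : Type*} [TopologicalSpace T] [TopologicalSpace X]
    [PreconnectedSpace T] {Z : Set (T × X)} (hZ : IsOpen Z)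
    (hconn : ∀ t : T, IsPreconnected {x : X | (t, x) ∈ Z})
    (hne : ∀ t : T, {x : X | (t, x) ∈ Z}.Nonempty) : IsPreconnected Z := by
  intro u v hu hv hcov ⟨zu, hzu⟩ ⟨zv, hzv⟩
  by_contra hE
  rw [Set.not_nonempty_iff_eq_empty] at hE
  have dich : ∀ t : T, {x : X | (t, x) ∈ Z} ⊆ {x | (t, x) ∈ u} ∨
      {x : X | (t, x) ∈ Z} ⊆ {x | (t, x) ∈ v} := by
    intro t
    have hut : IsOpen {x : X | (t, x) ∈ u ∧ (t,x) ∈ Z} :=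
      (hu.inter hZ).preimage (Continuous.prodMk_right t)
    have hvt : IsOpen {x : X | (t, x) ∈ v ∧ (t,x) ∈ Z} :=
      (hv.inter hZ).preimage (Continuous.prodMk_right t)
    have hdisj : Disjoint {x : X | (t, x) ∈ u ∧ (t,x) ∈ Z} {x : X | (t, x) ∈ v ∧ (t,x) ∈ Z} := by
      rw [Set.disjoint_iff]
      rintro x ⟨⟨h1, h1'⟩, ⟨h2, _⟩⟩
      have : (t, x) ∈ Z ∩ (u ∩ v) := ⟨h1', h1, h2⟩
      rw [hE] at this
      exact this
    have hsub : {x : X | (t, x) ∈ Z} ⊆ {x : X | (t, x) ∈ u ∧ (t,x) ∈ Z} ∪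
        {x : X | (t, x) ∈ v ∧ (t,x) ∈ Z} := by
      intro x hx
      rcases hcov hx with h | h
      · exact Or.inl ⟨h, hx⟩
      · exact Or.inr ⟨h, hx⟩
    rcases (hconn t).subset_or_subset hut hvt hdisj hsub with h | h
    · exact Or.inl fun x hx => (h hx).1
    · exact Or.inr fun x hx => (h hx).1
  set S : Set T := {t | {x : X | (t, x) ∈ Z} ⊆ {x | (t, x) ∈ u}} with hS
  have hZu : ∀ t, t ∈ S ↔ ∃ x, (t, x) ∈ Z ∩ u := by
    intro t
    constructor
    · intro ht
      obtain ⟨x, hx⟩ := hne t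
      exact ⟨x, hx, ht hx⟩
    · rintro ⟨x, hxZ, hxu⟩
      rcases dich t with h | h
      · exact h
      · exfalso
        have : (t, x) ∈ Z ∩ (u ∩ v) := ⟨hxZ, hxu, h hxZ⟩
        rw [hE] at this; exact this
  have hZv : ∀ t, t ∉ S → {x : X | (t, x) ∈ Z} ⊆ {x | (t, x) ∈ v} := by
    intro t ht
    rcases dich t with h | h
    · exact absurd h ht
    · exact h
  have hSopen : IsOpen S := by
    rw [isOpen_iff_mem_nhds]
    intro t ht
    obtain ⟨x, hx⟩ := (hZu t).mp ht
    have : Z ∩ u ∈ 𝓝 ((t, x) : T × X) := (hZ.inter hu).mem_nhds hx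
    rw [nhds_prod_eq, Filter.mem_prod_iff] at this
    obtain ⟨a, ha, b, hb, hab⟩ := this
    filter_upwards [ha] with t' ht'
    exact (hZu t').mpr ⟨x, hab ⟨ht', mem_of_mem_nhds hb⟩⟩
  have hScopen : IsOpen Sᶜ := by
    rw [isOpen_iff_mem_nhds]
    intro t ht
    obtain ⟨x, hx⟩ := hne t
    have hxv : (t, x) ∈ Z ∩ v := ⟨hx, hZv t ht hx⟩
    have : Z ∩ v ∈ 𝓝 ((t, x) : T × X) := (hZ.inter hv).mem_nhds hxv
    rw [nhds_prod_eq, Filter.mem_prod_iff] at this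
    obtain ⟨a, ha, b, hb, hab⟩ := this
    filter_upwards [ha] with t' ht' ht'S
    obtain ⟨x', hx'⟩ := (hZu t').mp ht'S
    have hx'v : (t', x) ∈ Z ∩ v := hab ⟨ht', mem_of_mem_nhds hb⟩
    have : (t', x) ∈ Z ∩ (u ∩ v) := ⟨hx'v.1, ht'S hx'v.1, hx'v.2⟩
    rw [hE] at this; exact this
  have h1 : S.Nonempty := ⟨zu.1, (hZu zu.1).mpr ⟨zu.2, hzu⟩⟩
  have h2 : Sᶜ.Nonempty := by
    refine ⟨zv.1, fun hzv1 => ?_⟩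
    have : (zv.1, zv.2) ∈ Z ∩ (u ∩ v) := ⟨hzv.1, hzv1 hzv.1, hzv.2⟩
    rw [hE] at this; exact this
  rcases isClopen_iff.mp ⟨⟨hScopen⟩, hSopen⟩ with h | h
  · exact h1.ne_empty h
  · rw [h] at h2
    simp at h2

end GoldbergAux

section MainProof

open unitInterval

attribute [local instance] Path.Homotopic.setoid

noncomputable instance : LocallyPathConnectedSpace S2 := locPC_of_balls ball_pc_S2
noncomputable instance : LocallyPathConnectedSpace unitInterval :=
  locPC_of_balls fun x r hr _ => ball_pc_I x r hr
noncomputable instance : LocallyPathConnectedSpace (unitInterval × S2) := locPC_prod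

theorem combo_ne_zero {P : E3} (hP : ‖P‖ = 1) {xi : E3} (hxi : ‖xi‖ = 1) (hne : xi ≠ -P)
    {a b : ℝ} (ha : 0 ≤ a) (hb : 0 ≤ b) (hab : 0 < a + b) : a • P + b • xi ≠ 0 := by
  intro h
  have h1 : a • P = -(b • xi) := eq_neg_of_add_eq_zero_left h
  have h2 : a = b := by
    have h3 := congrArg norm h1
    rw [norm_neg, norm_smul, norm_smul, hP, hxi, Real.norm_eq_abs, Real.norm_eq_abs,
      abs_of_nonneg ha, abs_of_nonneg hb, mul_one, mul_one] at h3
    exact h3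
  subst h2
  have ha' : 0 < a := by linarith
  have h4 : a • (P + xi) = 0 := by
    rw [smul_add]; exact h
  rcases smul_eq_zero.mp h4 with h5 | h5
  · exact ha'.ne' h5
  · exact padd_ne_zero hne h5

theorem loop_lift (P : E3) (hPm : P ∈ sphere (0 : E3) 1) (n : ℕ)
    (x₀ : ConfSpace n ↥(sphere (0 : E3) 1 \ {P}))
    (f : C(ConfSpace n ↥(sphere (0 : E3) 1 \ {P}), ConfSpace n S2))
    (hf : ∀ (c : ConfSpace n ↥(sphere (0 : E3) 1 \ {P})) (i : Fin n),
      (((f c).1 i : S2) : E3) = ((c.1 i : ↥(sphere (0 : E3) 1 \ {P})) : E3))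
    (γ : Path (f x₀) (f x₀)) :
    ∃ γ' : Path x₀ x₀, (γ'.map f.continuous).Homotopic γ := by
  have hP : ‖P‖ = 1 := by simpa using mem_sphere_zero_iff_norm.mp hPm
  set PS : S2 := ⟨P, hPm⟩ with hPS
  have hnegPm : -P ∈ sphere (0 : E3) 1 := by
    rw [mem_sphere_zero_iff_norm, norm_neg, hP]
  set nPS : S2 := ⟨-P, hnegPm⟩ with hnPS
  have hPnegP : P ≠ -P := by
    intro h
    have : (2 : ℝ) • P = 0 := by linear_combination (norm := module) h
    rcases smul_eq_zero.mp this with h' | h'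
    · norm_num at h'
    · rw [h'] at hP; simp at hP
  -- the complement of the braid and the antipode
  set Z : Set (unitInterval × S2) :=
    {w | (∀ i : Fin n, (γ w.1).1 i ≠ w.2) ∧ w.2 ≠ nPS} with hZdef
  have hZopen : IsOpen Z := by
    have hre : Z = (⋂ i : Fin n, {w : unitInterval × S2 | (γ w.1).1 i = w.2}ᶜ) ∩
        {w : unitInterval × S2 | w.2 = nPS}ᶜ := by
      ext w
      simp only [hZdef, mem_setOf_eq, mem_inter_iff, mem_iInter, mem_compl_iff] <;> tauto
    rw [hre]
    refine IsOpen.inter (isOpen_iInter_of_finite fun i => ?_) ?_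
    · refine (isClosed_eq ?_ continuous_snd).isOpen_compl
      exact (continuous_apply i).comp
        (continuous_subtype_val.comp (γ.continuous.comp continuous_fst))
    · exact (isClosed_eq continuous_snd continuous_const).isOpen_compl
  have hslice : ∀ t : unitInterval, IsPathConnected {x : S2 | (t, x) ∈ Z} := by
    intro t
    have hre : {x : S2 | (t, x) ∈ Z} =
        {x : S2 | x ∉ (range fun i : Fin n => (γ t).1 i) ∪ {nPS}} := by
      ext x
      simp only [hZdef, mem_setOf_eq, mem_union, mem_range, mem_singleton_iff, not_or,
        not_exists] <;> tauto
    rw [hre]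
    exact sphere_compl_pathConnected _ ((finite_range _).union (finite_singleton _))
      ⟨nPS, Or.inr rfl⟩
  -- basepoint coordinates avoid P
  have hbase : ∀ i : Fin n, ((f x₀).1 i : E3) ≠ P := by
    intro i
    rw [hf x₀ i]
    exact fun h => ((x₀.1 i).2.2) (by simpa [mem_singleton_iff] using h)
  have hz0 : ((0 : unitInterval), PS) ∈ Z := by
    constructor
    · intro i h
      apply hbase i
      rw [show γ (0 : unitInterval) = f x₀ from γ.source] at h
      exact congrArg Subtype.val h
    · exact fun h => hPnegP (congrArg Subtype.val h)
  have hz1 : ((1 : unitInterval), PS) ∈ Z := by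
    constructor
    · intro i h
      apply hbase i
      rw [show γ (1 : unitInterval) = f x₀ from γ.target] at h
      exact congrArg Subtype.val h
    · exact fun h => hPnegP (congrArg Subtype.val h)
  -- select a path in Z
  have hjoined : JoinedIn Z ((0 : unitInterval), PS) ((1 : unitInterval), PS) := by
    have hpre : IsPreconnected Z := slices_preconnected hZopen
      (fun t => (hslice t).isConnected.isPreconnected)
      (fun t => let ⟨x, hx, _⟩ := hslice t; ⟨x, hx⟩)
    have hconn : IsConnected Z := ⟨⟨_, hz0⟩, hpre⟩
    rw [hZopen.isConnected_iff_isPathConnected] at hconn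
    exact hconn.joinedIn _ hz0 _ hz1
  obtain ⟨sel, hsel⟩ := hjoined
  -- notation
  set τ : unitInterval → unitInterval := fun s => (sel s).1 with hτdef
  set xs : unitInterval → E3 := fun s => ((sel s).2 : E3) with hxsdef
  have hxs_norm : ∀ s, ‖xs s‖ = 1 := fun s => norm_eq_of_mem_sphere (sel s).2
  have hxs_ne : ∀ s, xs s ≠ -P := by
    intro s h
    exact (hsel s).2 (Subtype.ext h)
  have hγne : ∀ s i, (((γ (τ s)).1 i : S2) : E3) ≠ xs s := by
    intro s i h
    exact (hsel s).1 i (Subtype.ext h)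
  -- the moving rotation parameter
  set wv : unitInterval × unitInterval → E3 :=
    fun p => (1 - p.1.1) • P + p.1.1 • xs p.2 with hwvdef
  have hwv_ne : ∀ p, wv p ≠ 0 := by
    intro p
    exact combo_ne_zero hP (hxs_norm p.2) (hxs_ne p.2)
      (by linarith [p.1.2.2]) p.1.2.1 (by linarith)
  set xi : unitInterval × unitInterval → E3 := fun p => ‖wv p‖⁻¹ • wv p with hxidef
  have hxi_norm : ∀ p, ‖xi p‖ = 1 := by
    intro p
    have h1 : 0 < ‖wv p‖ := norm_pos_iff.mpr (hwv_ne p)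
    rw [hxidef]
    simp only
    rw [norm_smul, Real.norm_eq_abs, abs_of_pos (inv_pos.mpr h1), inv_mul_cancel₀ h1.ne']
  have hxi_ne : ∀ p, xi p ≠ -P := by
    intro p h
    have h1 : 0 < ‖wv p‖ := norm_pos_iff.mpr (hwv_ne p)
    have h2 : wv p = ‖wv p‖ • (-P) := by
      have h3 := congrArg (fun z : E3 => ‖wv p‖ • z) h
      rwa [hxidef, smul_inv_smul₀ h1.ne'] at h3
    have h2' : (1 - p.1.1) • P + p.1.1 • xs p.2 = ‖wv p‖ • (-P) := h2
    have h3 : ((1 - p.1.1) + ‖wv p‖) • P + p.1.1 • xs p.2 = 0 := by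
      linear_combination (norm := module) h2'
    exact combo_ne_zero hP (hxs_norm p.2) (hxs_ne p.2)
      (by linarith [p.1.2.2, norm_nonneg (wv p)]) p.1.2.1
      (by linarith [norm_nonneg (wv p)]) h3
  have hxs_cont : Continuous xs :=
    continuous_subtype_val.comp (continuous_snd.comp sel.continuous)
  have hwv_cont : Continuous wv := by
    rw [hwvdef]
    have h1 : Continuous fun p : unitInterval × unitInterval => (p.1.1 : ℝ) :=
      continuous_subtype_val.comp continuous_fst
    exact ((continuous_const.sub h1).smul continuous_const).add
      (h1.smul (hxs_cont.comp continuous_snd))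
  have hxi_cont : Continuous xi := by
    rw [hxidef]
    exact (hwv_cont.norm.inv₀ fun p => norm_ne_zero_iff.mpr (hwv_ne p)).smul hwv_cont
  -- the time reparametrization
  have hτ_cont : Continuous τ := continuous_fst.comp sel.continuous
  set θ : unitInterval × unitInterval → unitInterval := fun p =>
    ⟨(1 - p.1.1) * p.2.1 + p.1.1 * (τ p.2).1,
      ⟨by nlinarith [p.1.2.1, p.1.2.2, p.2.2.1, p.2.2.2, (τ p.2).2.1, (τ p.2).2.2],
       by nlinarith [p.1.2.1, p.1.2.2, p.2.2.1, p.2.2.2, (τ p.2).2.1, (τ p.2).2.2]⟩⟩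
    with hθdef
  have hθ_cont : Continuous θ := by
    refine Continuous.subtype_mk ?_ _
    have h1 : Continuous fun p : unitInterval × unitInterval => (p.1.1 : ℝ) :=
      continuous_subtype_val.comp continuous_fst
    have h2 : Continuous fun p : unitInterval × unitInterval => (p.2.1 : ℝ) :=
      continuous_subtype_val.comp continuous_snd
    have h3 : Continuous fun p : unitInterval × unitInterval => ((τ p.2).1 : ℝ) :=
      continuous_subtype_val.comp (hτ_cont.comp continuous_snd)
    exact ((continuous_const.sub h1).mul h2).add (h1.mul h3)
  -- the total homotopy map, coordinatewise
  set Hc : unitInterval × unitInterval → Fin n → E3 :=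
    fun p i => Amap P (xi p) (((γ (θ p)).1 i : S2) : E3) with hHcdef
  have hHc_mem : ∀ p i, Hc p i ∈ sphere (0 : E3) 1 := by
    intro p i
    rw [mem_sphere_zero_iff_norm, hHcdef]
    simp only
    rw [Amap_norm hP (hxi_ne p)]
    exact norm_eq_of_mem_sphere _
  have hHc_inj : ∀ p, Function.Injective fun i => (⟨Hc p i, hHc_mem p i⟩ : S2) := by
    intro p i j h
    have h1 : Hc p i = Hc p j := congrArg Subtype.val h
    have h2 := Amap_inj hP (hxi_ne p) h1
    exact (γ (θ p)).2 (Subtype.ext h2)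
  set Hcm : unitInterval × unitInterval → ConfSpace n S2 :=
    fun p => ⟨fun i => ⟨Hc p i, hHc_mem p i⟩, hHc_inj p⟩ with hHcmdef
  have hHcm_cont : Continuous Hcm := by
    refine Continuous.subtype_mk (continuous_pi fun i => Continuous.subtype_mk ?_ _) _
    have hcoord : Continuous fun p : unitInterval × unitInterval =>
        (((γ (θ p)).1 i : S2) : E3) :=
      continuous_subtype_val.comp ((continuous_apply i).comp
        (continuous_subtype_val.comp (γ.continuous.comp hθ_cont)))
    exact Amap_cont hP hxi_cont hcoord hxi_ne
  -- boundary values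
  have hcoe0 : ((0 : unitInterval) : ℝ) = 0 := rfl
  have hcoe1 : ((1 : unitInterval) : ℝ) = 1 := rfl
  have hxi_u0 : ∀ s, xi ((0 : unitInterval), s) = P := by
    intro s
    have h1 : wv ((0 : unitInterval), s) = P := by
      rw [hwvdef]; simp only [hcoe0]
      module
    rw [hxidef]; simp only [h1, hP]
    norm_num
  have hxi_u1 : ∀ s, xi ((1 : unitInterval), s) = xs s := by
    intro s
    have h1 : wv ((1 : unitInterval), s) = xs s := by
      rw [hwvdef]; simp only [hcoe1]
      module
    rw [hxidef]; simp only [h1, hxs_norm s]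
    norm_num
  have hθ_u0 : ∀ s, θ ((0 : unitInterval), s) = s := by
    intro s
    apply Subtype.ext
    show (1 - ((0:unitInterval) : ℝ)) * s.1 + ((0:unitInterval) : ℝ) * (τ s).1 = s.1
    rw [hcoe0]; ring
  have hθ_u1 : ∀ s, θ ((1 : unitInterval), s) = τ s := by
    intro s
    apply Subtype.ext
    show (1 - ((1:unitInterval) : ℝ)) * s.1 + ((1:unitInterval) : ℝ) * (τ s).1 = (τ s).1
    rw [hcoe1]; ring
  have hsel0 : sel 0 = ((0 : unitInterval), PS) := sel.source
  have hsel1 : sel 1 = ((1 : unitInterval), PS) := sel.target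
  have hτ0 : τ 0 = 0 := congrArg Prod.fst hsel0
  have hτ1 : τ 1 = 1 := congrArg Prod.fst hsel1
  have hxs0 : xs 0 = P := congrArg (fun z => ((z.2 : S2) : E3)) hsel0
  have hxs1 : xs 1 = P := congrArg (fun z => ((z.2 : S2) : E3)) hsel1
  have hθ_s0 : ∀ u, θ (u, (0 : unitInterval)) = 0 := by
    intro u
    apply Subtype.ext
    show (1 - (u : ℝ)) * ((0:unitInterval) : ℝ) + (u : ℝ) * (τ 0).1 = ((0:unitInterval) : ℝ)
    rw [hτ0, hcoe0]; ring
  have hθ_s1 : ∀ u, θ (u, (1 : unitInterval)) = 1 := by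
    intro u
    apply Subtype.ext
    show (1 - (u : ℝ)) * ((1:unitInterval) : ℝ) + (u : ℝ) * (τ 1).1 = ((1:unitInterval) : ℝ)
    rw [hτ1, hcoe1]; ring
  have hxi_s0 : ∀ u, xi (u, (0 : unitInterval)) = P := by
    intro u
    have h1 : wv (u, (0 : unitInterval)) = P := by
      rw [hwvdef]; simp only [hxs0]
      module
    rw [hxidef]; simp only [h1, hP]
    norm_num
  have hxi_s1 : ∀ u, xi (u, (1 : unitInterval)) = P := by
    intro u
    have h1 : wv (u, (1 : unitInterval)) = P := by
      rw [hwvdef]; simp only [hxs1]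
      module
    rw [hxidef]; simp only [h1, hP]
    norm_num
  -- the lifted loop
  have hgp_mem : ∀ (s : unitInterval) (i : Fin n),
      Hc ((1 : unitInterval), s) i ∈ sphere (0 : E3) 1 \ {P} := by
    intro s i
    refine ⟨hHc_mem _ i, ?_⟩
    simp only [mem_singleton_iff]
    intro h
    have h2 := (Amap_eq_iff hP (hxi_norm ((1 : unitInterval), s))
      (hxi_ne ((1 : unitInterval), s)) _).mp h
    rw [hxi_u1 s] at h2
    exact hγne s i (by rw [← hθ_u1 s]; exact h2)
  have hgp_inj : ∀ s : unitInterval, Function.Injective fun i =>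
      (⟨Hc ((1 : unitInterval), s) i, hgp_mem s i⟩ : ↥(sphere (0 : E3) 1 \ {P})) := by
    intro s i j h
    have h1 : Hc ((1 : unitInterval), s) i = Hc ((1 : unitInterval), s) j :=
      congrArg Subtype.val h
    have h2 := Amap_inj hP (hxi_ne ((1 : unitInterval), s)) h1
    exact (γ (θ ((1 : unitInterval), s))).2 (Subtype.ext h2)
  set gp : Path x₀ x₀ := {
    toFun := fun s => ⟨fun i => ⟨Hc ((1 : unitInterval), s) i, hgp_mem s i⟩, hgp_inj s⟩
    continuous_toFun := by
      refine Continuous.subtype_mk (continuous_pi fun i => Continuous.subtype_mk ?_ _) _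
      have h1 : Continuous fun s : unitInterval => Hcm ((1 : unitInterval), s) :=
        hHcm_cont.comp (continuous_const.prodMk continuous_id)
      exact continuous_subtype_val.comp ((continuous_apply i).comp
        (continuous_subtype_val.comp h1))
    source' := by
      apply Subtype.ext
      funext i
      apply Subtype.ext
      show Hc ((1 : unitInterval), 0) i = ((x₀.1 i : ↥(sphere (0 : E3) 1 \ {P})) : E3)
      rw [hHcdef]
      simp only
      rw [hxi_s0, Amap_P hP, hθ_s0]
      rw [show γ (0 : unitInterval) = f x₀ from γ.source]
      exact hf x₀ i
    target' := by
      apply Subtype.ext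
      funext i
      apply Subtype.ext
      show Hc ((1 : unitInterval), 1) i = ((x₀.1 i : ↥(sphere (0 : E3) 1 \ {P})) : E3)
      rw [hHcdef]
      simp only
      rw [hxi_s1, Amap_P hP, hθ_s1]
      rw [show γ (1 : unitInterval) = f x₀ from γ.target]
      exact hf x₀ i } with hgpdef
  refine ⟨gp, ?_⟩
  -- the homotopy from γ to the mapped lift
  have hom : Path.Homotopy γ (gp.map f.continuous) := {
    toFun := Hcm
    continuous_toFun := hHcm_cont
    map_zero_left := by
      intro s
      apply Subtype.ext
      funext i
      apply Subtype.ext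
      show Hc ((0 : unitInterval), s) i = (((γ s).1 i : S2) : E3)
      rw [hHcdef]
      simp only
      rw [hxi_u0, Amap_P hP, hθ_u0]
    map_one_left := by
      intro s
      apply Subtype.ext
      funext i
      apply Subtype.ext
      show Hc ((1 : unitInterval), s) i = (((f (gp s)).1 i : S2) : E3)
      rw [hf (gp s) i]
      rfl
    prop' := by
      intro t s hs
      rcases hs with hs | hs
      · subst hs
        apply Subtype.ext
        funext i
        apply Subtype.ext
        show Hc (t, (0 : unitInterval)) i = (((γ (0 : unitInterval)).1 i : S2) : E3)
        rw [hHcdef]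
        simp only
        rw [hxi_s0, Amap_P hP, hθ_s0]
      · rw [mem_singleton_iff] at hs
        subst hs
        apply Subtype.ext
        funext i
        apply Subtype.ext
        show Hc (t, (1 : unitInterval)) i = (((γ (1 : unitInterval)).1 i : S2) : E3)
        rw [hHcdef]
        simp only
        rw [hxi_s1, Amap_P hP, hθ_s1] }
  exact (Path.Homotopic.symm ⟨hom⟩)

end MainProof


end GoldbergProof

/-- Goldberg's theorem for the sphere: the homomorphism
`π₁(F_n(S² \ {P})) → π₁(F_n(S²))` induced by inclusion is surjective, i.e. `P_n(S²)`
is generated by the images of the Artin pure braids. -/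
theorem goldberg_sphere (P : EuclideanSpace ℝ (Fin 3))
    (hP : P ∈ Metric.sphere (0 : EuclideanSpace ℝ (Fin 3)) 1) (n : ℕ) (hn : 1 ≤ n)
    (x₀ : ConfSpace n ↥(Metric.sphere (0 : EuclideanSpace ℝ (Fin 3)) 1 \ {P})) :
    Function.Surjective
      ⇑(inducedHom
          (confMapC
            (⟨Set.inclusion Set.diff_subset, continuous_inclusion Set.diff_subset⟩ :
              C(↥(Metric.sphere (0 : EuclideanSpace ℝ (Fin 3)) 1 \ {P}),
                ↥(Metric.sphere (0 : EuclideanSpace ℝ (Fin 3)) 1)))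
            (Set.inclusion_injective Set.diff_subset) n) x₀) := by
  exact inducedHom_surj _ x₀ (loop_lift P hP n x₀ _ (fun c i => rfl))
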